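/- arXiv:2010.04281 — 4 statements merged into one kernel-verified Lean document; each statement's English description precedes it below -/
import Mathlib

section
/- For any positive reals M1 and M2 and any c in (0,1], the quantity c·M1·M2 / ((M1+M2)·(M1+(1-c)·M2)) is at most (1-√(1-c))²/c. -/
/-!
Writing `c = 1 - s²` with `s = √(1 - c)`, the inequality cleared of denominators is the identity
`(1 - s)² (M₁ + M₂)(M₁ + s² M₂) = c² M₁ M₂ + (1 - s)² (M₁ - s M₂)²`,
whose last term vanishes exactly when `M₁ = s M₂`.
-/

lemma sq_one_sub_mul_add_mul_add_sq_mul (a b s : ℝ) :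
    (1 - s) ^ 2 * ((a + b) * (a + s ^ 2 * b)) =
      (1 - s ^ 2) ^ 2 * (a * b) + ((1 - s) * (a - s * b)) ^ 2 := by
  ring

lemma div_le_sq_one_sub_div_of_sq_eq {a b c s : ℝ} (ha : 0 < a) (hb : 0 < b) (hc : 0 < c)
    (hs : s ^ 2 = 1 - c) :
    c * a * b / ((a + b) * (a + (1 - c) * b)) ≤ (1 - s) ^ 2 / c := by
  have hden : 0 < (a + b) * (a + (1 - c) * b) := by
    rw [← hs]
    positivity
  rw [div_le_div_iff₀ hden hc]
  have hc' : c = 1 - s ^ 2 := by linarith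
  rw [← hs, sq_one_sub_mul_add_mul_add_sq_mul, ← hc']
  linarith [sq_nonneg ((1 - s) * (a - s * b))]

theorem stmt_0 (M1 M2 c : ℝ) (hM1 : 0 < M1) (hM2 : 0 < M2) (hc0 : 0 < c) (hc1 : c ≤ 1) :
    c * M1 * M2 / ((M1 + M2) * (M1 + (1 - c) * M2)) ≤ (1 - Real.sqrt (1 - c)) ^ 2 / c :=
  div_le_sq_one_sub_div_of_sq_eq hM1 hM2 hc0 (Real.sq_sqrt (by linarith))
end

section
/- Let E = {e_1,...,e_n} with n ≥ 2k+1, c ∈ (0,1], C > 1, and define f(S) = C·x_1 + (1 - c·x_1)·∑_{i=2}^{k+1} x_i + (1 - c/2)·∑_{i=k+2}^{2k+1} x_i where x_i = [e_i ∈ S]. Then f is monotone submodular with curvature at most c (for C large enough), and the deterministic greedy algorithm with budget k outputs {e_1, e_{k+2},...,e_{2k}} on f but outputs {e_2,...,e_{k+1}} on f restricted to E\{e_1}; hence the symmetric difference of the two outputs has size at least k. -/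
/-!
With `B = {2, …, k+1}` and `D = {k+2, …, 2k+1}`, the marginal gain of `e ∉ S` is
`[e = 1] (C - c |S ∩ B|) + [e ∈ B] (1 - c [1 ∈ S]) + [e ∈ D] (1 - c/2)`, and everything is read
off this formula. Since `|S ∩ B| ≤ k ≤ C`, gains are nonnegative and at least `1 - c` times the
gain at `∅`. Up to modular terms `f` is `-c [1 ∈ S] |S ∩ B|`, and a product of two monotone
modular functions is supermodular, so `f` is submodular. On the full ground set greedy first
takes `e₁` (gain `C > 1`); afterwards elements of `B` are worth only `1 - c < 1 - c/2`, so it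
fills up with `D`.
Without `e₁`, elements of `B` are worth `1 > 1 - c/2`, and greedy takes all of `B`.
-/

open scoped Classical

/-- The element of `G` with maximum value of `φ` (ties broken by least index),
returned as a singleton set; `∅` if `G = ∅`. -/
noncomputable def greedyPick (φ : ℕ → ℝ) (G : Finset ℕ) : Finset ℕ :=
  let Maxers := G.filter (fun e => ∀ e' ∈ G, φ e' ≤ φ e)
  if h : Maxers.Nonempty then {Maxers.min' h} else ∅

/-- The deterministic greedy algorithm on ground set `G` with budget `k`,
repeatedly adding the element of maximum marginal gain (ties broken by index). -/
noncomputable def greedy (f : Finset ℕ → ℝ) (G : Finset ℕ) : ℕ → Finset ℕ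
  | 0 => ∅
  | k + 1 =>
      let S := greedy f G k
      S ∪ greedyPick (fun e => f (insert e S) - f S) (G \ S)

open Finset

theorem greedyPick_eq_singleton {φ : ℕ → ℝ} {G : Finset ℕ} {t : ℕ} (ht : t ∈ G)
    (hmax : ∀ e ∈ G, φ e ≤ φ t) (hlt : ∀ e ∈ G, e < t → φ e < φ t) :
    greedyPick φ G = {t} := by
  have htM : t ∈ G.filter (fun e => ∀ e' ∈ G, φ e' ≤ φ e) := mem_filter.2 ⟨ht, hmax⟩
  rw [greedyPick, dif_pos ⟨t, htM⟩, singleton_inj]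
  refine le_antisymm (min'_le _ _ htM) (le_min' _ _ _ fun e he => ?_)
  obtain ⟨heG, he_max⟩ := mem_filter.1 he
  exact not_lt.1 fun het => (hlt e heG het).not_ge (he_max t ht)

def marginalGain {α : Type*} [DecidableEq α] (f : Finset α → ℝ) (S : Finset α) (e : α) : ℝ :=
  f (insert e S) - f S

theorem greedy_succ_eq_insert {f : Finset ℕ → ℝ} {G S : Finset ℕ} {m t : ℕ}
    (hS : greedy f G m = S) (ht : t ∈ G \ S)
    (hmax : ∀ e ∈ G \ S, marginalGain f S e ≤ marginalGain f S t)
    (hlt : ∀ e ∈ G \ S, e < t → marginalGain f S e < marginalGain f S t) :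
    greedy f G (m + 1) = insert t S := by
  rw [insert_eq, union_comm, ← greedyPick_eq_singleton ht hmax hlt, ← hS]
  rfl

theorem monotone_of_le_insert {α : Type*} [DecidableEq α] {f : Finset α → ℝ}
    (h : ∀ S e, e ∉ S → f S ≤ f (insert e S)) {A B : Finset α} (hAB : A ⊆ B) : f A ≤ f B := by
  suffices ∀ T, f A ≤ f (A ∪ T) by simpa [union_eq_right.2 hAB] using this B
  intro T
  induction T using Finset.induction_on with
  | empty => simp
  | insert a T _ ih =>
    rw [union_insert]
    by_cases ha : a ∈ A ∪ T
    · rwa [insert_eq_of_mem ha]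
    · exact ih.trans (h _ _ ha)

theorem mul_add_mul_le_mul_add_mul_of_add_eq {R : Type*} [CommRing R] [LinearOrder R]
    [IsStrictOrderedRing R] {a₁ a₂ a a' b₁ b₂ b b' : R}
    (ha : a + a' = a₁ + a₂) (hb : b + b' = b₁ + b₂)
    (ha₁ : a' ≤ a₁) (ha₂ : a' ≤ a₂) (hb₁ : b' ≤ b₁) (hb₂ : b' ≤ b₂) :
    a₁ * b₁ + a₂ * b₂ ≤ a * b + a' * b' := by
  rw [eq_sub_of_add_eq ha, eq_sub_of_add_eq hb]
  -- the difference of the two sides is `(a₁ - a') (b₂ - b') + (a₂ - a') (b₁ - b')`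
  nlinarith [mul_nonneg (sub_nonneg.2 ha₁) (sub_nonneg.2 hb₂),
    mul_nonneg (sub_nonneg.2 ha₂) (sub_nonneg.2 hb₁)]

section CountIn

variable {α : Type*} [DecidableEq α]

-- `|R ∩ S|`, in the paper's form `∑_{i ∈ R} x_i` with `x_i = [i ∈ S]`
def countIn (R S : Finset α) : ℝ := ∑ i ∈ R, if i ∈ S then 1 else 0

theorem countIn_singleton (a : α) (S : Finset α) :
    countIn {a} S = if a ∈ S then 1 else 0 :=
  sum_singleton _ _

theorem countIn_empty (R : Finset α) : countIn R ∅ = 0 := by simp [countIn]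

theorem countIn_insert (R : Finset α) {S : Finset α} {e : α} (he : e ∉ S) :
    countIn R (insert e S) = countIn R S + if e ∈ R then 1 else 0 := by
  rw [countIn, countIn, ← sum_ite_eq' R e fun _ => (1 : ℝ), ← sum_add_distrib]
  refine sum_congr rfl fun i _ => ?_
  by_cases hi : i = e
  · simp [hi, he]
  · simp [hi]

theorem countIn_le_card (R S : Finset α) : countIn R S ≤ #R :=
  calc countIn R S ≤ ∑ _ ∈ R, (1 : ℝ) := sum_le_sum fun _ _ => by split_ifs <;> norm_num
    _ = #R := by simp

theorem countIn_mono (R : Finset α) {A B : Finset α} (h : A ⊆ B) : countIn R A ≤ countIn R B :=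
  sum_le_sum fun i _ => by
    by_cases hA : i ∈ A
    · simp [hA, h hA]
    · rw [if_neg hA]; split_ifs <;> norm_num

theorem countIn_union_add_countIn_inter (R A B : Finset α) :
    countIn R (A ∪ B) + countIn R (A ∩ B) = countIn R A + countIn R B := by
  simp only [countIn, ← sum_add_distrib]
  refine sum_congr rfl fun i _ => ?_
  by_cases hA : i ∈ A <;> by_cases hB : i ∈ B <;> simp [hA, hB]

end CountIn

section HardInstance

variable {k : ℕ} {c C : ℝ}

noncomputable def hardInstance (k : ℕ) (c C : ℝ) (S : Finset ℕ) : ℝ :=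
  C * countIn {1} S + (1 - c * countIn {1} S) * countIn (Icc 2 (k + 1)) S
    + (1 - c / 2) * countIn (Icc (k + 2) (2 * k + 1)) S

theorem hardInstance_empty : hardInstance k c C ∅ = 0 := by
  simp [hardInstance, countIn_empty]

theorem marginalGain_hardInstance {S : Finset ℕ} {e : ℕ} (he : e ∉ S) :
    marginalGain (hardInstance k c C) S e =
      (if e = 1 then C - c * countIn (Icc 2 (k + 1)) S else 0)
        + (if e ∈ Icc 2 (k + 1) then 1 - c * countIn {1} S else 0)
        + (if e ∈ Icc (k + 2) (2 * k + 1) then 1 - c / 2 else 0) := by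
  simp only [marginalGain, hardInstance, countIn_insert _ he]
  by_cases h1 : e = 1
  · subst h1
    simp only [mem_singleton, mem_Icc, if_true]
    split_ifs <;> first | omega | ring
  · simp only [mem_singleton, h1, if_false]
    split_ifs <;> ring

theorem marginalGain_hardInstance_of_ne_one {S : Finset ℕ} {e : ℕ} (he : e ∉ S) (h1 : e ≠ 1) :
    marginalGain (hardInstance k c C) S e =
      if e ∈ Icc 2 (k + 1) then 1 - c * countIn {1} S
      else if e ∈ Icc (k + 2) (2 * k + 1) then 1 - c / 2 else 0 := by
  rw [marginalGain_hardInstance he, if_neg h1]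
  simp only [mem_Icc]
  split_ifs <;> first | omega | ring

theorem hardInstance_singleton (e : ℕ) :
    hardInstance k c C {e} = marginalGain (hardInstance k c C) ∅ e := by
  rw [marginalGain, hardInstance_empty, sub_zero]
  rfl

theorem one_sub_mul_le_marginalGain_hardInstance (hc0 : 0 ≤ c) (hc1 : c ≤ 1) (hC : k ≤ C)
    {S : Finset ℕ} {e : ℕ} (he : e ∉ S) :
    (1 - c) * hardInstance k c C {e} ≤ marginalGain (hardInstance k c C) S e := by
  have hB : countIn (Icc 2 (k + 1)) S ≤ k := by
    simpa using countIn_le_card (Icc 2 (k + 1)) S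
  have hx : countIn {1} S ≤ 1 := by simpa using countIn_le_card {1} S
  rw [hardInstance_singleton, marginalGain_hardInstance he,
    marginalGain_hardInstance (notMem_empty e)]
  simp only [countIn_empty, mul_zero, sub_zero]
  split_ifs <;> nlinarith

theorem marginalGain_hardInstance_nonneg (hc0 : 0 ≤ c) (hc1 : c ≤ 1) (hC : k ≤ C)
    {S : Finset ℕ} {e : ℕ} (he : e ∉ S) : 0 ≤ marginalGain (hardInstance k c C) S e := by
  have hB : countIn (Icc 2 (k + 1)) S ≤ k := by
    simpa using countIn_le_card (Icc 2 (k + 1)) S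
  have hx : countIn {1} S ≤ 1 := by simpa using countIn_le_card {1} S
  rw [marginalGain_hardInstance he]
  split_ifs <;> nlinarith

theorem hardInstance_mono (hc0 : 0 ≤ c) (hc1 : c ≤ 1) (hC : k ≤ C) {A B : Finset ℕ}
    (hAB : A ⊆ B) : hardInstance k c C A ≤ hardInstance k c C B :=
  monotone_of_le_insert (fun _ _ he =>
    sub_nonneg.1 (marginalGain_hardInstance_nonneg hc0 hc1 hC he)) hAB

theorem hardInstance_union_add_inter_le (hc0 : 0 ≤ c) (A B : Finset ℕ) :
    hardInstance k c C (A ∪ B) + hardInstance k c C (A ∩ B)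
      ≤ hardInstance k c C A + hardInstance k c C B := by
  have hprod := mul_add_mul_le_mul_add_mul_of_add_eq
    (countIn_union_add_countIn_inter {1} A B)
    (countIn_union_add_countIn_inter (Icc 2 (k + 1)) A B)
    (countIn_mono _ inter_subset_left) (countIn_mono _ inter_subset_right)
    (countIn_mono _ inter_subset_left) (countIn_mono _ inter_subset_right)
  simp only [hardInstance]
  linear_combination C * countIn_union_add_countIn_inter {1} A B
    + countIn_union_add_countIn_inter (Icc 2 (k + 1)) A B
    + (1 - c / 2) * countIn_union_add_countIn_inter (Icc (k + 2) (2 * k + 1)) A B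
    + mul_le_mul_of_nonneg_left hprod hc0

end HardInstance

section GreedyRuns

variable {n k : ℕ} {c C : ℝ}

theorem greedy_hardInstance_one (hn : 1 ≤ n) (hC : 1 < C) (hc0 : 0 < c) :
    greedy (hardInstance k c C) (Icc 1 n) 1 = {1} := by
  have hgain : ∀ e, marginalGain (hardInstance k c C) ∅ e =
      (if e = 1 then C else 0) + (if e ∈ Icc 2 (k + 1) then 1 else 0)
        + (if e ∈ Icc (k + 2) (2 * k + 1) then 1 - c / 2 else 0) := fun e => by
    simp [marginalGain_hardInstance (notMem_empty e), countIn_empty]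
  rw [← insert_empty]
  refine greedy_succ_eq_insert (S := ∅) rfl (by simpa using hn) (fun e _ => ?_)
    (fun e he he1 => ?_)
  · rw [hgain, hgain]
    simp only [mem_Icc]
    split_ifs <;> first | omega | linarith
  · simp only [sdiff_empty, mem_Icc] at he
    omega

theorem greedy_hardInstance_Icc (hn : 2 * k ≤ n) (hC : 1 < C)
    (hc0 : 0 < c) (hc1 : c ≤ 1) {m : ℕ} (hm : 1 ≤ m) (hmk : m ≤ k) :
    greedy (hardInstance k c C) (Icc 1 n) m = insert 1 (Icc (k + 2) (k + m)) := by
  induction m, hm using Nat.le_induction with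
  | base =>
    rw [greedy_hardInstance_one (by omega) hC hc0, Icc_eq_empty (by omega)]
    rfl
  | succ m hm ih =>
    set S := insert 1 (Icc (k + 2) (k + m))
    have hx : countIn {1} S = 1 := by simp [S, countIn_singleton]
    have hgain : ∀ e ∈ Icc 1 n \ S, marginalGain (hardInstance k c C) S e =
        if e ∈ Icc 2 (k + 1) then 1 - c else if e ∈ Icc (k + 2) (2 * k + 1) then 1 - c / 2
        else 0 := fun e he => by
      have he' := mem_sdiff.1 he
      rw [marginalGain_hardInstance_of_ne_one he'.2 (fun h => he'.2 (h ▸ mem_insert_self _ _)),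
        hx, mul_one]
    have ht : k + m + 1 ∈ Icc 1 n \ S := by simp only [S, mem_sdiff, mem_insert, mem_Icc]; omega
    rw [greedy_succ_eq_insert (ih (by omega)) ht]
    · ext; simp only [S, mem_insert, mem_Icc]; omega
    all_goals
      intro e he
      rw [hgain e he, hgain _ ht]
      simp only [S, mem_sdiff, mem_insert, mem_Icc] at he
      simp only [mem_Icc]
      split_ifs <;> first | omega | intro; linarith | linarith

theorem greedy_hardInstance_erase_one (hn : k + 1 ≤ n) (hc0 : 0 < c)
    {m : ℕ} (hmk : m ≤ k) :
    greedy (hardInstance k c C) ((Icc 1 n).erase 1) m = Icc 2 (m + 1) := by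
  induction m with
  | zero => exact (Icc_eq_empty (by omega)).symm
  | succ m ih =>
    set S := Icc 2 (m + 1)
    have hx : countIn {1} S = 0 := by simp [S, countIn_singleton]
    have hgain : ∀ e ∈ (Icc 1 n).erase 1 \ S, marginalGain (hardInstance k c C) S e =
        if e ∈ Icc 2 (k + 1) then 1 else if e ∈ Icc (k + 2) (2 * k + 1) then 1 - c / 2
        else 0 := fun e he => by
      have he' := mem_sdiff.1 he
      rw [marginalGain_hardInstance_of_ne_one he'.2 (mem_erase.1 he'.1).1, hx, mul_zero, sub_zero]
    have ht : m + 2 ∈ (Icc 1 n).erase 1 \ S := by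
      simp only [S, mem_sdiff, mem_erase, mem_Icc]; omega
    rw [greedy_succ_eq_insert (ih (by omega)) ht]
    · ext; simp only [S, mem_insert, mem_Icc]; omega
    all_goals
      intro e he
      rw [hgain e he, hgain _ ht]
      simp only [S, mem_sdiff, mem_erase, mem_Icc] at he
      simp only [mem_Icc]
      split_ifs <;> first | omega | linarith

end GreedyRuns

theorem stmt_9 (n k : ℕ) (hk : 1 ≤ k) (hn : 2 * k + 1 ≤ n)
    (c : ℝ) (hc0 : 0 < c) (hc1 : c ≤ 1) :
    ∃ C0 : ℝ, 1 < C0 ∧ ∀ C : ℝ, C0 ≤ C →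
      ∀ f : Finset ℕ → ℝ,
        (∀ S : Finset ℕ,
          f S = C * (if 1 ∈ S then 1 else 0)
            + (1 - c * (if 1 ∈ S then 1 else 0)) *
                (∑ i ∈ Finset.Icc 2 (k + 1), if i ∈ S then (1 : ℝ) else 0)
            + (1 - c / 2) *
                (∑ i ∈ Finset.Icc (k + 2) (2 * k + 1), if i ∈ S then (1 : ℝ) else 0)) →
        (∀ A B : Finset ℕ, A ⊆ B → f A ≤ f B) ∧
        (∀ A B : Finset ℕ, f (A ∪ B) + f (A ∩ B) ≤ f A + f B) ∧
        (∀ e ∈ Finset.Icc 1 n,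
          (1 - c) * f {e} ≤ f (Finset.Icc 1 n) - f ((Finset.Icc 1 n).erase e)) ∧
        greedy f (Finset.Icc 1 n) k = insert 1 (Finset.Icc (k + 2) (2 * k)) ∧
        greedy f ((Finset.Icc 1 n).erase 1) k = Finset.Icc 2 (k + 1) ∧
        k ≤ ((greedy f (Finset.Icc 1 n) k \ greedy f ((Finset.Icc 1 n).erase 1) k)
              ∪ (greedy f ((Finset.Icc 1 n).erase 1) k \ greedy f (Finset.Icc 1 n) k)).card := by
  have hk' : (1 : ℝ) ≤ k := by exact_mod_cast hk
  refine ⟨k + 1, by linarith, fun C hC f hf => ?_⟩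
  obtain rfl : f = hardInstance k c C := funext fun S => by
    rw [hf, hardInstance, countIn_singleton]; rfl
  have hfull := greedy_hardInstance_Icc (n := n) (k := k) (C := C) (by omega) (by linarith)
    hc0 hc1 hk le_rfl
  rw [← two_mul] at hfull
  have hres := greedy_hardInstance_erase_one (n := n) (k := k) (C := C) (by omega) hc0 le_rfl
  refine ⟨fun A B => hardInstance_mono hc0.le hc1 (by linarith),
    hardInstance_union_add_inter_le hc0.le, fun e he => ?_, hfull, hres, ?_⟩
  · have := one_sub_mul_le_marginalGain_hardInstance hc0.le hc1 (by linarith)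
      (notMem_erase e (Icc 1 n))
    rwa [marginalGain, insert_erase he] at this
  · rw [hfull, hres]
    calc k = #(Icc 2 (k + 1)) := by simp
      _ ≤ _ := card_le_card fun a ha => mem_union_right _ <|
        mem_sdiff.2 ⟨ha, by simp only [mem_insert, mem_Icc] at ha ⊢; omega⟩
end

section
/- Let f : 2^E → ℝ_{≥0} be monotone submodular with f(∅) = 0, let OPT be an optimal solution of size k, and let S ⊆ E with |S| ≤ k and |E| = n. If an element e is chosen from E \ S with probability proportional to its marginal gain f_S(e) = f(S∪{e}) - f(S), then f(OPT) - f(S) ≤ (n - k)·E[f(S∪{e}) - f(S)]. -/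
/-!
Submodularity bounds the gain of adding a whole set by the sum of the single-element gains, so
by monotonicity `f OPT - f S ≤ f univ - f S ≤ M`, where `M` is the total marginal gain over
`univ \ S`. Writing `Q` for the sum of the squared gains, `Q / M` is the expected gain of an
element drawn with probability proportional to its gain, and Cauchy–Schwarz `M² ≤ |univ \ S| Q`
gives `M ≤ |univ \ S| · Q / M` (for `M = 0` both sides are `0`, as `Q / 0 = 0`).
-/

open Finset

theorem le_add_sum_marginal_of_submodular {α β : Type*} [DecidableEq α] [AddCommGroup β]
    [PartialOrder β] [IsOrderedAddMonoid β] {f : Finset α → β}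
    (hsub : ∀ A B : Finset α, f (A ∪ B) + f (A ∩ B) ≤ f A + f B) (S T : Finset α) :
    f (S ∪ T) ≤ f S + ∑ e ∈ T, (f (insert e S) - f S) := by
  induction T using Finset.induction_on with
  | empty => simp
  | @insert a T haT ih =>
    have hunion : insert a S ∪ (S ∪ T) = S ∪ insert a T := by grind
    have hinter : insert a S ∩ (S ∪ T) = S := by grind
    have hstep := hsub (insert a S) (S ∪ T)
    rw [hunion, hinter] at hstep
    rw [sum_insert haT]
    calc f (S ∪ insert a T) ≤ f (insert a S) - f S + f (S ∪ T) := by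
          rw [sub_add_eq_add_sub, le_sub_iff_add_le]; exact hstep
      _ ≤ f (insert a S) - f S + (f S + ∑ e ∈ T, (f (insert e S) - f S)) := by gcongr
      _ = _ := add_left_comm _ _ _

theorem sum_le_card_mul_sum_sq_div_sum {ι α : Type*} [Field α] [LinearOrder α]
    [IsStrictOrderedRing α] (s : Finset ι) {g : ι → α} (hg : ∀ i ∈ s, 0 ≤ g i) :
    ∑ i ∈ s, g i ≤ #s * ((∑ i ∈ s, g i ^ 2) / ∑ i ∈ s, g i) := by
  rcases (sum_nonneg hg).eq_or_lt with hzero | hpos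
  · rw [← hzero, div_zero, mul_zero]
  · rw [mul_div_assoc', le_div_iff₀ hpos, ← sq]
    exact sq_sum_le_card_mul_sum_sq

theorem stmt_11_general (E : Type*) [Fintype E] [DecidableEq E]
    (f : Finset E → ℝ)
    (hmono : ∀ A B : Finset E, A ⊆ B → f A ≤ f B)
    (hsub : ∀ A B : Finset E, f (A ∪ B) + f (A ∩ B) ≤ f A + f B)
    (OPT : Finset E)
    (S : Finset E) :
    f OPT - f S ≤
      ((Finset.univ \ S).card : ℝ) *
        ((∑ e ∈ Finset.univ \ S, (f (insert e S) - f S) ^ 2) /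
          (∑ e ∈ Finset.univ \ S, (f (insert e S) - f S))) := by
  have hgain : f univ ≤ f S + ∑ e ∈ univ \ S, (f (insert e S) - f S) := by
    have h := le_add_sum_marginal_of_submodular hsub S (univ \ S)
    rwa [union_sdiff_of_subset (subset_univ S)] at h
  have hgain_nonneg : ∀ e ∈ univ \ S, 0 ≤ f (insert e S) - f S := fun e _ =>
    sub_nonneg.2 (hmono _ _ (subset_insert e S))
  calc f OPT - f S ≤ ∑ e ∈ univ \ S, (f (insert e S) - f S) := by
        linarith [hmono OPT univ (subset_univ OPT)]
    _ ≤ _ := sum_le_card_mul_sum_sq_div_sum _ hgain_nonneg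

theorem stmt_11 (E : Type*) [Fintype E] [DecidableEq E]
    (f : Finset E → ℝ)
    (hmono : ∀ A B : Finset E, A ⊆ B → f A ≤ f B)
    (hsub : ∀ A B : Finset E, f (A ∪ B) + f (A ∩ B) ≤ f A + f B)
    (hnonneg : ∀ S : Finset E, 0 ≤ f S) (hempty : f ∅ = 0)
    (k : ℕ) (OPT : Finset E) (hcard : OPT.card = k)
    (hopt : ∀ T : Finset E, T.card ≤ k → f T ≤ f OPT)
    (S : Finset E) (hS : S.card ≤ k) :
    f OPT - f S ≤
      ((Finset.univ \ S).card : ℝ) *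
        ((∑ e ∈ Finset.univ \ S, (f (insert e S) - f S) ^ 2) /
          (∑ e ∈ Finset.univ \ S, (f (insert e S) - f S))) :=
  stmt_11_general E f hmono hsub OPT S
end

section
/- Define h : [1-c,1]^R → ℝ for a finite index set R, weights m'(e) > 0, and c ∈ (0,1] by h(α) = (1/2)·∑_{e∈R} | α(e)·m'(e)/(∑_{e'} α(e')·m'(e')) - m'(e)/(∑_{e'} m'(e')) |. Then h(α) ≤ (1-√(1-c))²/c for all α ∈ [1-c,1]^R. -/
/-!
With `S = ∑ m'` and `T = ∑ α m'` both distributions have mass one, so `h(α)` is the sum of the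
positive parts of `α m' / T - m' / S = m' / (S T) * (α S - T)`. Since `(1 - c) S ≤ T ≤ S`, each
`(α(e) S - T)⁺` is a convex function of `α(e) ∈ [1 - c, 1]` vanishing at `1 - c`, hence lies below
its chord; summing the chords gives `h(α) ≤ (S - T) (T - (1 - c) S) / (c S T)`, and with
`s = √(1 - c)` the identity `(1 - s)² S T - (S - T) (T - s² S) = (T - s S)²` finishes.
In the degenerate case `T = 0` (so `c = 1`) Lean's `x / 0 = 0` makes the left side `1 / 2`.
-/

open Finset Set

lemma Finset.sum_abs_eq_two_nsmul_sum_posPart {ι α : Type*} [Lattice α] [AddCommGroup α]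
    [AddLeftMono α] (s : Finset ι) (f : ι → α) (hf : ∑ i ∈ s, f i = 0) :
    ∑ i ∈ s, |f i| = 2 • ∑ i ∈ s, (f i)⁺ := by
  rw [← add_zero (∑ i ∈ s, |f i|), ← hf, ← sum_add_distrib, smul_sum]
  simp_rw [abs_add_eq_two_nsmul_posPart]

lemma posPart_mul_of_nonneg {k : ℝ} (hk : 0 ≤ k) (x : ℝ) : (k * x)⁺ = k * x⁺ := by
  simp only [posPart_def, mul_max_of_nonneg _ _ hk, mul_zero]

lemma sum_mul_mem_Icc {ι : Type*} (s : Finset ι) {m a : ι → ℝ} {lo hi : ℝ}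
    (hm : ∀ i ∈ s, 0 ≤ m i) (ha : ∀ i ∈ s, a i ∈ Icc lo hi) :
    ∑ i ∈ s, a i * m i ∈ Icc (lo * ∑ i ∈ s, m i) (hi * ∑ i ∈ s, m i) := by
  rw [mul_sum, mul_sum]
  exact ⟨sum_le_sum fun i hi ↦ mul_le_mul_of_nonneg_right (ha i hi).1 (hm i hi),
    sum_le_sum fun i hi ↦ mul_le_mul_of_nonneg_right (ha i hi).2 (hm i hi)⟩

lemma posPart_mul_sub_mul_le {lo hi a S T : ℝ} (ha : a ∈ Icc lo hi)
    (hT : T ∈ Icc (lo * S) (hi * S)) :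
    (a * S - T)⁺ * (hi - lo) ≤ (hi * S - T) * (a - lo) := by
  obtain ⟨hloa, hahi⟩ := ha
  obtain ⟨hloT, hThi⟩ := hT
  rcases le_total (a * S - T) 0 with h | h
  · rw [posPart_eq_zero.2 h, zero_mul]
    exact mul_nonneg (by linarith) (by linarith)
  · rw [posPart_eq_self.2 h]
    nlinarith [mul_nonneg (sub_nonneg.2 hahi) (sub_nonneg.2 hloT)]

lemma sum_posPart_mul_div_sub_div_le {ι : Type*} (s : Finset ι) {m a : ι → ℝ}
    {lo hi S T : ℝ} (hm : ∀ i ∈ s, 0 ≤ m i) (ha : ∀ i ∈ s, a i ∈ Icc lo hi) (hlo : lo < hi)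
    (hS : ∑ i ∈ s, m i = S) (hT : ∑ i ∈ s, a i * m i = T) (hS0 : 0 < S) (hT0 : 0 < T) :
    ∑ i ∈ s, (a i * m i / T - m i / S)⁺
      ≤ (hi * S - T) * (T - lo * S) / ((hi - lo) * (S * T)) := by
  have hTmem : T ∈ Icc (lo * S) (hi * S) := hS ▸ hT ▸ sum_mul_mem_Icc s hm ha
  have hterm : ∀ i ∈ s, (a i * m i / T - m i / S)⁺
      ≤ m i / (S * T) * ((hi * S - T) * (a i - lo) / (hi - lo)) := by
    intro i hi'
    have hk : 0 ≤ m i / (S * T) := div_nonneg (hm i hi') (by positivity)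
    have hsplit : a i * m i / T - m i / S = m i / (S * T) * (a i * S - T) := by
      field_simp
    rw [hsplit, posPart_mul_of_nonneg hk]
    exact mul_le_mul_of_nonneg_left
      ((le_div_iff₀ (sub_pos.2 hlo)).2 (posPart_mul_sub_mul_le (ha i hi') hTmem)) hk
  calc ∑ i ∈ s, (a i * m i / T - m i / S)⁺
      ≤ ∑ i ∈ s, m i / (S * T) * ((hi * S - T) * (a i - lo) / (hi - lo)) := sum_le_sum hterm
    _ = (hi * S - T) / ((hi - lo) * (S * T)) * ∑ i ∈ s, (a i * m i - lo * m i) := by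
      have : hi - lo ≠ 0 := (sub_pos.2 hlo).ne'
      rw [mul_sum]
      exact sum_congr rfl fun i _ ↦ by field_simp
    _ = (hi * S - T) * (T - lo * S) / ((hi - lo) * (S * T)) := by
      rw [sum_sub_distrib, ← mul_sum, hT, hS, mul_div_right_comm]

lemma sub_mul_sub_le_one_sub_sq_mul (S T s : ℝ) :
    (S - T) * (T - s ^ 2 * S) ≤ (1 - s) ^ 2 * (S * T) := by
  nlinarith [sq_nonneg (T - s * S)]

theorem stmt_16 (R : Type*) [Fintype R] [Nonempty R]
    (m' : R → ℝ) (hm' : ∀ e, 0 < m' e) (c : ℝ) (hc0 : 0 < c) (hc1 : c ≤ 1)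
    (α : R → ℝ) (hα : ∀ e, 1 - c ≤ α e ∧ α e ≤ 1) :
    (1 / 2) * ∑ e : R, |α e * m' e / (∑ e' : R, α e' * m' e')
        - m' e / (∑ e' : R, m' e')|
      ≤ (1 - Real.sqrt (1 - c)) ^ 2 / c := by
  set S := ∑ e' : R, m' e' with hS
  set T := ∑ e' : R, α e' * m' e'
  have hS0 : 0 < S := sum_pos (fun e _ ↦ hm' e) univ_nonempty
  have hTmem : T ∈ Icc ((1 - c) * S) (1 * S) :=
    sum_mul_mem_Icc univ (fun e _ ↦ (hm' e).le) (fun e _ ↦ hα e)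
  rcases (mul_nonneg (by linarith) hS0.le |>.trans hTmem.1).eq_or_lt with hT0 | hT0
  · have hc : c = 1 := by nlinarith [hTmem.1]
    have hterm : ∀ e, |α e * m' e / T - m' e / S| = m' e / S := fun e ↦ by
      rw [← hT0, div_zero, zero_sub, abs_neg, abs_of_pos (div_pos (hm' e) hS0)]
    simp_rw [hterm, ← sum_div, ← hS, div_self hS0.ne', hc]
    norm_num
  · have hsum : ∑ e, (α e * m' e / T - m' e / S) = 0 := by
      rw [sum_sub_distrib, ← sum_div, ← sum_div, div_self hT0.ne', div_self hS0.ne', sub_self]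
    set s := Real.sqrt (1 - c)
    have hs : s ^ 2 = 1 - c := Real.sq_sqrt (by linarith)
    calc (1 / 2) * ∑ e, |α e * m' e / T - m' e / S|
        = ∑ e, (α e * m' e / T - m' e / S)⁺ := by
          rw [sum_abs_eq_two_nsmul_sum_posPart _ _ hsum, two_nsmul]
          ring
      _ ≤ (1 * S - T) * (T - (1 - c) * S) / ((1 - (1 - c)) * (S * T)) :=
          sum_posPart_mul_div_sub_div_le univ (fun e _ ↦ (hm' e).le) (fun e _ ↦ hα e)
            (by linarith) rfl rfl hS0 hT0
      _ ≤ (1 - s) ^ 2 / c := by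
        rw [one_mul, sub_sub_cancel, mul_comm c, ← div_div, ← hs]
        gcongr
        rw [div_le_iff₀ (by positivity)]
        exact sub_mul_sub_le_one_sub_sq_mul S T _
end
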